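/- Non-zero entropy property of capacity achieving ULDCs (Lemma 3, Property 1): let N ≥ 2, K ≥ 1, and consider a universal locally decodable code (ULDC) with locality N, K source symbols of entropy L_w > 0, M coded symbols of entropy L_x, and symbol rate L_w/L_x = C*(N,K). Then for every i ∈ {1,…,M} and every k ∈ {1,…,K}, H(X_i | W_k̄) > 0, where W_k̄ denotes the tuple of all source symbols other than W_k. -/

import Mathlib

/-!
Suppose `H(X_i | W_k̄) = 0` and take a decoding set `S ∋ i` of `W_k`. By independence of the
source symbols `L_w = H(W_k | W_k̄)`, and since `W_k` is determined by `X_S` this is at most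
`H(X_S | W_k̄) ≤ ∑_{j ∈ S} H(X_j | W_k̄) ≤ (N - 1) L_x`, the term `j = i` being zero.
But `C*(N, K) > N - 1`, so `L_w = C*(N, K) L_x > (N - 1) L_x`.

The Shannon inequalities behind this come from Gibbs' inequality. Writing `H(X)` as the
expectation of `-log₂ P(X = X ω)` shows that `H(X)` depends only on the partition of `Ω`
induced by `X`, which takes care of all regrouping of tuples.
-/

open scoped BigOperators

noncomputable section

/-- A finite probability space: a finite type together with a probability mass function. -/
structure FinProbSpace where
  Ω : Type
  [fin : Fintype Ω]
  p : Ω → ℝ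
  nonneg : ∀ ω, 0 ≤ p ω
  sum_one : ∑ ω, p ω = 1

attribute [instance] FinProbSpace.fin

namespace FinProbSpace

variable (P : FinProbSpace)

/-- Probability that the random variable `X` takes the value `a`. -/
def prob {α : Type} [DecidableEq α] (X : P.Ω → α) (a : α) : ℝ :=
  ∑ ω, if X ω = a then P.p ω else 0

/-- Shannon entropy (in bits) of a finitely valued random variable. -/
def H {α : Type} [Fintype α] [DecidableEq α] (X : P.Ω → α) : ℝ :=
  ∑ a, -(P.prob X a * Real.logb 2 (P.prob X a))

/-- Conditional Shannon entropy `H(X | Y) = H(X, Y) - H(Y)` (in bits). -/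
def condH {α β : Type} [Fintype α] [DecidableEq α] [Fintype β] [DecidableEq β]
    (X : P.Ω → α) (Y : P.Ω → β) : ℝ :=
  P.H (fun ω => (X ω, Y ω)) - P.H Y

/-- The tuple random variable `(X_i)_{i ∈ ι}`. -/
def tuple {ι V : Type} (X : ι → P.Ω → V) : P.Ω → ι → V := fun ω i => X i ω

/-- Joint (mutual) independence of a finite family of random variables. -/
def iIndep {ι V : Type} [Fintype ι] [DecidableEq ι] [DecidableEq V] (X : ι → P.Ω → V) : Prop :=
  ∀ a : ι → V, P.prob (P.tuple X) a = ∏ i, P.prob (X i) (a i)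

/-- `X` and `Y` contain the same information about everything beyond `Z`:
`H(X | Y, Z) = H(Y | X, Z) = 0`. -/
def sameInfo {α β γ : Type} [Fintype α] [DecidableEq α] [Fintype β] [DecidableEq β]
    [Fintype γ] [DecidableEq γ] (X : P.Ω → α) (Y : P.Ω → β) (Z : P.Ω → γ) : Prop :=
  P.condH X (fun ω => (Y ω, Z ω)) = 0 ∧ P.condH Y (fun ω => (X ω, Z ω)) = 0

end FinProbSpace

/-- A locally decodable code with `K` source symbols of entropy `Lw`, `M` coded symbols of
entropy `Lx`, and locality `N`. -/
structure LDC (K N M : ℕ) (Lw Lx : ℝ) where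
  P : FinProbSpace
  V : Type
  [fV : Fintype V]
  [dV : DecidableEq V]
  V' : Type
  [fV' : Fintype V']
  [dV' : DecidableEq V']
  /-- the source symbols -/
  W : Fin K → P.Ω → V
  /-- the coded symbols -/
  X : Fin M → P.Ω → V'
  indep : P.iIndep W
  HW : ∀ k, P.H (W k) = Lw
  coded_fn : ∀ m, ∃ f : (Fin K → V) → V', ∀ ω, X m ω = f (fun k => W k ω)
  HX : ∀ m, P.H (X m) = Lx
  /-- the decoding supersets -/
  decSets : Fin K → Finset (Finset (Fin M))
  decSets_nonempty : ∀ k, (decSets k).Nonempty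
  decSets_card : ∀ k, ∀ s ∈ decSets k, s.card = N
  decodes : ∀ k, ∀ s ∈ decSets k,
    P.condH (W k) (P.tuple fun i : {x // x ∈ s} => X i.1) = 0

attribute [instance] LDC.fV LDC.dV LDC.fV' LDC.dV'

/-- A universal LDC: every coded symbol appears in some decoding set of every source symbol. -/
def LDC.IsUniversal {K N M : ℕ} {Lw Lx : ℝ} (C : LDC K N M Lw Lx) : Prop :=
  ∀ (m : Fin M) (k : Fin K), ∃ s ∈ C.decSets k, m ∈ s

/-- A perfectly smooth LDC: for each source symbol, every coded symbol lies in the same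
number of decoding sets. -/
def LDC.IsSmooth {K N M : ℕ} {Lw Lx : ℝ} (C : LDC K N M Lw Lx) : Prop :=
  ∀ (k : Fin K) (m m' : Fin M),
    ((C.decSets k).filter (fun s => m ∈ s)).card =
      ((C.decSets k).filter (fun s => m' ∈ s)).card

/-- `C*(N, K) = N (1 + 1/N + ⋯ + 1/N^{K-1})⁻¹`. -/
def Cstar (N K : ℕ) : ℝ := N / (∑ j ∈ Finset.range K, (1 / (N : ℝ)) ^ j)

/-- An `N`-query information retrieval scheme with `K` messages of entropy `Lw` and
answer sets of sizes `Mn n` with answers of entropy `Lx`. -/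
structure IRScheme (K N : ℕ) (Mn : Fin N → ℕ) (Lw Lx : ℝ) where
  P : FinProbSpace
  V : Type
  [fV : Fintype V]
  [dV : DecidableEq V]
  V' : Type
  [fV' : Fintype V']
  [dV' : DecidableEq V']
  /-- the messages -/
  W : Fin K → P.Ω → V
  /-- `A n m` is the `m`-th possible answer of database `n` -/
  A : (n : Fin N) → Fin (Mn n) → P.Ω → V'
  indep : P.iIndep W
  HW : ∀ k, P.H (W k) = Lw
  ans_fn : ∀ n m, ∃ f : (Fin K → V) → V', ∀ ω, A n m ω = f (fun k => W k ω)
  HA : ∀ n m, P.H (A n m) = Lx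
  /-- the decoding supersets: each decoding set consists of one answer index per database -/
  Q : Fin K → Finset ((n : Fin N) → Fin (Mn n))
  Q_nonempty : ∀ k, (Q k).Nonempty
  decodes : ∀ k, ∀ q ∈ Q k, P.condH (W k) (P.tuple fun n => A n (q n)) = 0

attribute [instance] IRScheme.fV IRScheme.dV IRScheme.fV' IRScheme.dV'

/-- A repudiative (RIR_max) scheme: every possible answer of every database appears in some
decoding set of every message. -/
def IRScheme.IsRIR {K N : ℕ} {Mn : Fin N → ℕ} {Lw Lx : ℝ} (C : IRScheme K N Mn Lw Lx) : Prop :=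
  ∀ (n : Fin N) (m : Fin (Mn n)) (k : Fin K), ∃ q ∈ C.Q k, q n = m

/-- A perfectly private (PIR_max) scheme: for each message there is a distribution on its
decoding sets such that the marginal distribution of the query to each database does not
depend on the message. -/
def IRScheme.IsPIR {K N : ℕ} {Mn : Fin N → ℕ} {Lw Lx : ℝ} (C : IRScheme K N Mn Lw Lx) : Prop :=
  ∃ μ : Fin K → ((n : Fin N) → Fin (Mn n)) → ℝ,
    (∀ k q, 0 ≤ μ k q) ∧ (∀ k, ∑ q ∈ C.Q k, μ k q = 1) ∧
    (∀ (k k' : Fin K) (n : Fin N) (m : Fin (Mn n)),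
      ∑ q ∈ (C.Q k).filter (fun q => q n = m), μ k q =
        ∑ q ∈ (C.Q k').filter (fun q => q n = m), μ k' q)

/-- `C_K(N) = (1 + 1/N + ⋯ + 1/N^{K-1})⁻¹`, the capacity of PIR. -/
def CK (N K : ℕ) : ℝ := (∑ j ∈ Finset.range K, (1 / (N : ℝ)) ^ j)⁻¹

lemma Real.sum_mul_log_le_sum_mul_log {ι : Type*} [Fintype ι] {f g : ι → ℝ}
    (hf : ∀ i, 0 ≤ f i) (hg : ∀ i, 0 ≤ g i) (hfg : ∀ i, 0 < f i → 0 < g i)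
    (hsum : ∑ i, g i ≤ ∑ i, f i) :
    ∑ i, f i * Real.log (g i) ≤ ∑ i, f i * Real.log (f i) := by
  have key : ∀ i, f i * Real.log (g i) ≤ f i * Real.log (f i) + (g i - f i) := by
    intro i
    rcases (hf i).eq_or_lt with h0 | hpos
    · simp [← h0, hg i]
    · have hlog := Real.log_le_sub_one_of_pos (div_pos (hfg i hpos) hpos)
      rw [Real.log_div (hfg i hpos).ne' hpos.ne'] at hlog
      have hmul : f i * (g i / f i - 1) = g i - f i := by field_simp
      linarith [mul_le_mul_of_nonneg_left hlog hpos.le]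
  calc ∑ i, f i * Real.log (g i) ≤ ∑ i, (f i * Real.log (f i) + (g i - f i)) :=
        Finset.sum_le_sum fun i _ => key i
    _ ≤ ∑ i, f i * Real.log (f i) := by
        rw [Finset.sum_add_distrib, Finset.sum_sub_distrib]
        linarith

namespace FinProbSpace

variable (P : FinProbSpace) {α β γ : Type}

section Prob

variable [DecidableEq α] [DecidableEq β]

lemma prob_nonneg (X : P.Ω → α) (a : α) : 0 ≤ P.prob X a :=
  Finset.sum_nonneg fun ω _ => by split_ifs <;> simp [P.nonneg ω]

lemma prob_congr {X : P.Ω → α} {Y : P.Ω → β} {a : α} {b : β} (h : ∀ ω, X ω = a ↔ Y ω = b) :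
    P.prob X a = P.prob Y b :=
  Finset.sum_congr rfl fun ω _ => if_congr (h ω) rfl rfl

lemma prob_mono {X : P.Ω → α} {Y : P.Ω → β} {a : α} {b : β} (h : ∀ ω, X ω = a → Y ω = b) :
    P.prob X a ≤ P.prob Y b :=
  Finset.sum_le_sum fun ω _ => by
    by_cases hX : X ω = a
    · simp [hX, h ω hX]
    · rw [if_neg hX]
      split_ifs <;> simp [P.nonneg ω]

lemma p_le_prob_self (X : P.Ω → α) (ω : P.Ω) : P.p ω ≤ P.prob X (X ω) := by
  unfold prob
  simpa using Finset.single_le_sum (f := fun ω' => if X ω' = X ω then P.p ω' else 0)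
    (fun ω' _ => by split_ifs <;> simp [P.nonneg ω']) (Finset.mem_univ ω)

lemma sum_prob_mul [Fintype α] (X : P.Ω → α) (φ : α → ℝ) :
    ∑ a, P.prob X a * φ a = ∑ ω, P.p ω * φ (X ω) := by
  simp only [prob, Finset.sum_mul, ite_mul, zero_mul]
  rw [Finset.sum_comm]
  simp

lemma sum_prob_mul_comp [Fintype α] [Fintype β] (X : P.Ω → α) (f : α → β) (φ : β → ℝ) :
    ∑ a, P.prob X a * φ (f a) = ∑ b, P.prob (fun ω => f (X ω)) b * φ b := by
  rw [sum_prob_mul, sum_prob_mul]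

lemma sum_prob [Fintype α] (X : P.Ω → α) : ∑ a, P.prob X a = 1 := by
  simpa [P.sum_one] using P.sum_prob_mul X 1

lemma sum_prob_prod_left [Fintype α] (X : P.Ω → α) (Y : P.Ω → β) (b : β) :
    ∑ a, P.prob (fun ω => (X ω, Y ω)) (a, b) = P.prob Y b := by
  simp only [prob, Prod.mk.injEq, ite_and]
  rw [Finset.sum_comm]
  simp

lemma prob_prod_eq_mul_of_eq_mul [Fintype α] (X : P.Ω → α) (Y : P.Ω → β) (g : β → ℝ)
    (hg : ∀ a b, P.prob (fun ω => (X ω, Y ω)) (a, b) = P.prob X a * g b) (a : α) (b : β) :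
    P.prob (fun ω => (X ω, Y ω)) (a, b) = P.prob X a * P.prob Y b := by
  have hY : P.prob Y b = g b := by
    rw [← P.sum_prob_prod_left X Y b]
    simp only [hg, ← Finset.sum_mul, P.sum_prob, one_mul]
  rw [hg, hY]

end Prob

section Entropy

variable [Fintype α] [DecidableEq α] [Fintype β] [DecidableEq β] [Fintype γ] [DecidableEq γ]

lemma H_eq_sum (X : P.Ω → α) : P.H X = ∑ ω, P.p ω * -Real.logb 2 (P.prob X (X ω)) := by
  rw [H, ← P.sum_prob_mul X fun a => -Real.logb 2 (P.prob X a)]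
  simp only [mul_neg]

lemma H_congr {X : P.Ω → α} {Y : P.Ω → β} (h : ∀ ω ω', X ω' = X ω ↔ Y ω' = Y ω) :
    P.H X = P.H Y := by
  rw [H_eq_sum, H_eq_sum]
  exact Finset.sum_congr rfl fun ω _ => by rw [P.prob_congr (h ω)]

lemma H_of_subsingleton [Subsingleton α] (X : P.Ω → α) : P.H X = 0 := by
  have hX : ∀ ω ω', X ω' = X ω ↔ True := fun _ _ => iff_true_intro (Subsingleton.elim _ _)
  simp [H_eq_sum, prob, hX, P.sum_one]

lemma H_le_H_prod (X : P.Ω → α) (Y : P.Ω → β) : P.H Y ≤ P.H (fun ω => (X ω, Y ω)) := by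
  rw [H_eq_sum, H_eq_sum]
  refine Finset.sum_le_sum fun ω _ => ?_
  rcases (P.nonneg ω).eq_or_lt with h0 | hpos
  · simp [← h0]
  · refine mul_le_mul_of_nonneg_left (neg_le_neg (Real.logb_le_logb_of_le one_lt_two ?_ ?_))
      hpos.le
    · exact hpos.trans_le (P.p_le_prob_self _ ω)
    · exact P.prob_mono fun ω' h => (Prod.ext_iff.mp h).2

lemma H_prod_of_indep (X : P.Ω → α) (Y : P.Ω → β)
    (h : ∀ a b, P.prob (fun ω => (X ω, Y ω)) (a, b) = P.prob X a * P.prob Y b) :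
    P.H (fun ω => (X ω, Y ω)) = P.H X + P.H Y := by
  rw [H_eq_sum, H_eq_sum, H_eq_sum, ← Finset.sum_add_distrib]
  refine Finset.sum_congr rfl fun ω _ => ?_
  rcases (P.nonneg ω).eq_or_lt with h0 | hpos
  · simp [← h0]
  · rw [h, Real.logb_mul (hpos.trans_le (P.p_le_prob_self X ω)).ne'
      (hpos.trans_le (P.p_le_prob_self Y ω)).ne']
    ring

lemma sum_prob_mul_logb_prob_comp (X : P.Ω → α) (f : α → β) :
    ∑ a, P.prob X a * Real.logb 2 (P.prob (fun ω => f (X ω)) (f a)) =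
      -P.H (fun ω => f (X ω)) := by
  rw [P.sum_prob_mul_comp X f fun b => Real.logb 2 (P.prob (fun ω => f (X ω)) b), H,
    ← Finset.sum_neg_distrib]
  simp only [neg_neg]

lemma H_submodular (X : P.Ω → α) (Y : P.Ω → β) (Z : P.Ω → γ) :
    P.H (fun ω => (X ω, Y ω, Z ω)) + P.H Z ≤
      P.H (fun ω => (X ω, Z ω)) + P.H (fun ω => (Y ω, Z ω)) := by
  set V : P.Ω → α × β × γ := fun ω => (X ω, Y ω, Z ω)
  let g : α × β × γ → ℝ := fun v =>
    P.prob (fun ω => (X ω, Z ω)) (v.1, v.2.2) * P.prob (fun ω => (Y ω, Z ω)) v.2 /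
      P.prob Z v.2.2
  have hsupp : ∀ v, 0 < P.prob V v →
      0 < P.prob (fun ω => (X ω, Z ω)) (v.1, v.2.2) ∧ 0 < P.prob (fun ω => (Y ω, Z ω)) v.2 ∧
        0 < P.prob Z v.2.2 := fun v hv =>
    ⟨hv.trans_le (P.prob_mono fun ω h => by simp [V, ← h]),
      hv.trans_le (P.prob_mono fun ω h => by simp [V, ← h]),
      hv.trans_le (P.prob_mono fun ω h => by simp [V, ← h])⟩
  -- Gibbs' inequality for `p(x,y,z)` against `g = p(x,z) p(y,z) / p(z)`, of total mass `≤ 1`.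
  have hg_sum : ∑ v, g v ≤ ∑ v, P.prob V v := by
    rw [P.sum_prob, ← P.sum_prob fun ω => (X ω, Z ω)]
    simp only [g, Fintype.sum_prod_type]
    refine Finset.sum_le_sum fun a _ => ?_
    rw [Finset.sum_comm]
    refine Finset.sum_le_sum fun c _ => ?_
    simp_rw [mul_div_assoc, ← Finset.mul_sum, ← Finset.sum_div, P.sum_prob_prod_left]
    exact mul_le_of_le_one_right (P.prob_nonneg _ _) (div_self_le_one _)
  have gibbs :
      ∑ v, P.prob V v * Real.logb 2 (g v) ≤ ∑ v, P.prob V v * Real.logb 2 (P.prob V v) := by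
    simp only [Real.logb, mul_div_assoc', ← Finset.sum_div]
    refine div_le_div_of_nonneg_right (Real.sum_mul_log_le_sum_mul_log (P.prob_nonneg V)
      (fun v => div_nonneg (mul_nonneg (P.prob_nonneg _ _) (P.prob_nonneg _ _)) (P.prob_nonneg _ _))
      (fun v hv => ?_) hg_sum) (Real.log_pos one_lt_two).le
    obtain ⟨h1, h2, h3⟩ := hsupp v hv
    exact div_pos (mul_pos h1 h2) h3
  have hsplit : ∀ v, P.prob V v * Real.logb 2 (g v) =
      P.prob V v * Real.logb 2 (P.prob (fun ω => (X ω, Z ω)) (v.1, v.2.2)) +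
        P.prob V v * Real.logb 2 (P.prob (fun ω => (Y ω, Z ω)) v.2) -
          P.prob V v * Real.logb 2 (P.prob Z v.2.2) := by
    intro v
    rcases (P.prob_nonneg V v).eq_or_lt with h0 | hv
    · simp [← h0]
    obtain ⟨h1, h2, h3⟩ := hsupp v hv
    rw [Real.logb_div (by positivity) h3.ne', Real.logb_mul h1.ne' h2.ne']
    ring
  have hXZ := P.sum_prob_mul_logb_prob_comp V fun v => (v.1, v.2.2)
  have hYZ := P.sum_prob_mul_logb_prob_comp V Prod.snd
  have hZ := P.sum_prob_mul_logb_prob_comp V fun v => v.2.2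
  have hV := P.sum_prob_mul_logb_prob_comp V id
  simp only [Finset.sum_add_distrib, Finset.sum_sub_distrib, hsplit] at gibbs
  simp only [V, id] at hXZ hYZ hZ hV gibbs ⊢
  linarith

end Entropy

section CondEntropy

variable {δ : Type} [Fintype α] [DecidableEq α] [Fintype β] [DecidableEq β] [Fintype γ]
  [DecidableEq γ] [Fintype δ] [DecidableEq δ]

lemma condH_congr_left {X : P.Ω → α} {X' : P.Ω → β} (Z : P.Ω → γ)
    (h : ∀ ω ω', X ω' = X ω ↔ X' ω' = X' ω) : P.condH X Z = P.condH X' Z := by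
  rw [condH, condH, P.H_congr (Y := fun ω => (X' ω, Z ω)) fun ω ω' => by
    simp only [Prod.mk.injEq, h ω ω']]

lemma condH_congr_right (X : P.Ω → α) {Y : P.Ω → β} {Y' : P.Ω → γ}
    (h : ∀ ω ω', Y ω' = Y ω ↔ Y' ω' = Y' ω) : P.condH X Y = P.condH X Y' := by
  rw [condH, condH, P.H_congr h, P.H_congr (Y := fun ω => (X ω, Y' ω)) fun ω ω' => by
    simp only [Prod.mk.injEq, h ω ω']]

lemma condH_of_subsingleton [Subsingleton α] (X : P.Ω → α) (Z : P.Ω → β) :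
    P.condH X Z = 0 := by
  rw [condH, sub_eq_zero]
  exact P.H_congr fun ω ω' => by simp [Subsingleton.elim (X ω') (X ω)]

lemma condH_prod (X : P.Ω → α) (Y : P.Ω → β) (Z : P.Ω → γ) :
    P.condH (fun ω => (X ω, Y ω)) Z = P.condH X Z + P.condH Y (fun ω => (X ω, Z ω)) := by
  rw [condH, condH, condH, P.H_congr (Y := fun ω => (Y ω, X ω, Z ω)) fun ω ω' => by
    simp only [Prod.mk.injEq]; tauto]
  ring

lemma condH_le_condH_prod (X : P.Ω → α) (Y : P.Ω → β) (Z : P.Ω → γ) :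
    P.condH X Z ≤ P.condH (fun ω => (Y ω, X ω)) Z := by
  rw [condH, condH, P.H_congr (X := fun ω => ((Y ω, X ω), Z ω)) (Y := fun ω => (Y ω, X ω, Z ω))
    fun ω ω' => by simp only [Prod.mk.injEq, and_assoc]]
  linarith [P.H_le_H_prod Y fun ω => (X ω, Z ω)]

lemma condH_prod_le_right (X : P.Ω → α) (Y : P.Ω → β) (Z : P.Ω → γ) :
    P.condH X (fun ω => (Y ω, Z ω)) ≤ P.condH X Z := by
  rw [condH, condH]
  linarith [P.H_submodular X Y Z]

lemma condH_prod_le_left (X : P.Ω → α) (Y : P.Ω → β) (Z : P.Ω → γ) :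
    P.condH X (fun ω => (Y ω, Z ω)) ≤ P.condH X Y := by
  rw [P.condH_congr_right X (Y' := fun ω => (Z ω, Y ω)) fun ω ω' => by
    simp only [Prod.mk.injEq, and_comm]]
  exact P.condH_prod_le_right X Z Y

lemma condH_le_H (X : P.Ω → α) (Z : P.Ω → β) : P.condH X Z ≤ P.H X := by
  have h := P.condH_prod_le_right X Z fun _ => ()
  have hunit : P.condH X (fun _ => ()) = P.H X := by
    rw [condH, P.H_of_subsingleton (fun _ => ()), sub_zero]
    exact P.H_congr fun ω ω' => by simp
  rwa [P.condH_congr_right X (Y' := Z) (fun ω ω' => by simp), hunit] at h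

lemma condH_le_condH_of_condH_eq_zero {W : P.Ω → α} {T : P.Ω → β} (Z : P.Ω → γ)
    (h : P.condH W T = 0) : P.condH W Z ≤ P.condH T Z :=
  calc P.condH W Z ≤ P.condH (fun ω => (T ω, W ω)) Z := P.condH_le_condH_prod W T Z
    _ = P.condH T Z + P.condH W (fun ω => (T ω, Z ω)) := P.condH_prod T W Z
    _ ≤ P.condH T Z + P.condH W T := by gcongr; exact P.condH_prod_le_left W T Z
    _ = P.condH T Z := by rw [h, add_zero]

lemma condH_tuple_le_sum {ι : Type} [DecidableEq ι] (X : ι → P.Ω → δ) (Z : P.Ω → γ)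
    (s : Finset ι) :
    P.condH (P.tuple fun j : {x // x ∈ s} => X j.1) Z ≤ ∑ j ∈ s, P.condH (X j) Z := by
  induction s using Finset.induction_on with
  | empty => exact (P.condH_of_subsingleton _ Z).le
  | insert a s ha ih =>
    rw [P.condH_congr_left Z (X' := fun ω => (P.tuple (fun j : {x // x ∈ s} => X j.1) ω, X a ω))
      fun ω ω' => by simp [tuple, funext_iff, and_comm], P.condH_prod, Finset.sum_insert ha]
    linarith [P.condH_prod_le_right (X a) (P.tuple fun j : {x // x ∈ s} => X j.1) Z]

end CondEntropy

section Independence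

variable [DecidableEq α] {ι : Type} [Fintype ι] [DecidableEq ι] {W : ι → P.Ω → α}

lemma prob_prod_compl_of_iIndep (hW : P.iIndep W) (k : ι) (a : α)
    (v : {x // x ∈ ({k}ᶜ : Finset ι)} → α) :
    P.prob (fun ω => (W k ω, P.tuple (fun j : {x // x ∈ ({k}ᶜ : Finset ι)} => W j.1) ω)) (a, v) =
      P.prob (W k) a * ∏ j, P.prob (W j.1) (v j) := by
  let u : ι → α := fun j => if h : j ∈ ({k}ᶜ : Finset ι) then v ⟨j, h⟩ else a
  have huk : u k = a := dif_neg (by simp)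
  have hu : ∀ j : {x // x ∈ ({k}ᶜ : Finset ι)}, u j = v j := fun j => dif_pos j.2
  calc _ = P.prob (P.tuple W) u := P.prob_congr fun ω => by
        simp only [Prod.mk.injEq, tuple, funext_iff, Subtype.forall, u]
        constructor
        · rintro ⟨hk, hv⟩ j
          by_cases hj : j ∈ ({k}ᶜ : Finset ι)
          · simp [hj, hv j hj]
          · simp_all
        · intro h
          exact ⟨by simpa using h k, fun j hj => by simpa [hj] using h j⟩
    _ = P.prob (W k) (u k) * ∏ j ∈ {k}ᶜ, P.prob (W j) (u j) :=
        (hW u).trans (Fintype.prod_eq_mul_prod_compl k _)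
    _ = P.prob (W k) a * ∏ j, P.prob (W j.1) (v j) := by
        rw [huk, ← Finset.prod_coe_sort]
        simp only [hu]

lemma condH_eq_H_of_iIndep [Fintype α] (hW : P.iIndep W) (k : ι) :
    P.condH (W k) (P.tuple fun j : {x // x ∈ ({k}ᶜ : Finset ι)} => W j.1) = P.H (W k) := by
  rw [condH, P.H_prod_of_indep _ _
    (P.prob_prod_eq_mul_of_eq_mul _ _ _ (P.prob_prod_compl_of_iIndep hW k))]
  ring

end Independence

end FinProbSpace

lemma sub_one_lt_Cstar {N K : ℕ} (hN : 0 < N) (hK : 0 < K) : (N : ℝ) - 1 < Cstar N K := by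
  have hN' : (0 : ℝ) < N := by exact_mod_cast hN
  have hsum : 0 < ∑ j ∈ Finset.range K, (1 / (N : ℝ)) ^ j :=
    Finset.sum_pos (fun j _ => by positivity) (Finset.nonempty_range_iff.mpr hK.ne')
  have hgeom := geom_sum_mul (1 / (N : ℝ)) K
  rw [Cstar, lt_div_iff₀ hsum]
  have : ((N : ℝ) - 1) * ∑ j ∈ Finset.range K, (1 / (N : ℝ)) ^ j = N - N * (1 / N) ^ K := by
    field_simp at hgeom ⊢
    linarith
  rw [this]
  have : 0 < (N : ℝ) * (1 / N) ^ K := by positivity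
  linarith

namespace LDC

variable {K N M : ℕ} {Lw Lx : ℝ} (C : LDC K N M Lw Lx)

lemma Lw_le_condH_add {k : Fin K} {S : Finset (Fin M)} (hS : S ∈ C.decSets k) {i : Fin M}
    (hiS : i ∈ S) :
    Lw ≤ C.P.condH (C.X i) (C.P.tuple fun j : {x // x ∈ ({k}ᶜ : Finset (Fin K))} => C.W j.1) +
      (N - 1) * Lx := by
  set Z := C.P.tuple fun j : {x // x ∈ ({k}ᶜ : Finset (Fin K))} => C.W j.1
  have hcard : ((S.erase i).card : ℝ) = N - 1 := by
    rw [← C.decSets_card k S hS, ← Finset.card_erase_add_one hiS]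
    push_cast
    ring
  calc Lw = C.P.condH (C.W k) Z := by rw [C.P.condH_eq_H_of_iIndep C.indep, C.HW]
    _ ≤ C.P.condH (C.P.tuple fun j : {x // x ∈ S} => C.X j.1) Z :=
        C.P.condH_le_condH_of_condH_eq_zero Z (C.decodes k S hS)
    _ ≤ ∑ j ∈ S, C.P.condH (C.X j) Z := C.P.condH_tuple_le_sum C.X Z S
    _ = C.P.condH (C.X i) Z + ∑ j ∈ S.erase i, C.P.condH (C.X j) Z :=
        (Finset.add_sum_erase S _ hiS).symm
    _ ≤ C.P.condH (C.X i) Z + (N - 1) * Lx := by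
        gcongr
        rw [← hcard, ← nsmul_eq_mul]
        exact Finset.sum_le_card_nsmul _ _ _ fun j _ =>
          (C.P.condH_le_H _ Z).trans_eq (C.HX j)

end LDC

theorem uldc_nonzero_entropy_general (K N M : ℕ) (hK : 1 ≤ K) (Lw Lx : ℝ)
    (hLw : 0 < Lw) (C : LDC K N M Lw Lx) (hU : C.IsUniversal)
    (hcap : Lw / Lx = Cstar N K) (i : Fin M) (k : Fin K) :
    0 < C.P.condH (C.X i)
      (C.P.tuple fun j : {x // x ∈ ({k}ᶜ : Finset (Fin K))} => C.W j.1) := by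
  obtain ⟨S, hS, hiS⟩ := hU i k
  have hN : 0 < N := C.decSets_card k S hS ▸ Finset.card_pos.mpr ⟨i, hiS⟩
  have hCstar := sub_one_lt_Cstar hN hK
  have hLx : 0 < Lx := by
    have hN' : (1 : ℝ) ≤ N := by exact_mod_cast hN
    exact (div_pos_iff_of_pos_left hLw).mp (by linarith)
  have hLw_eq : Lw = Cstar N K * Lx := by rw [← hcap, div_mul_cancel₀ _ hLx.ne']
  by_contra! h
  linarith [C.Lw_le_condH_add hS hiS, mul_lt_mul_of_pos_right hCstar hLx]

/-- Non-zero entropy property, Lemma 3, Property 1: in a capacity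
achieving ULDC, `H(X_i | W_k̄) > 0` for every coded symbol `X_i` and every `k`. -/
theorem uldc_nonzero_entropy (K N M : ℕ) (hK : 1 ≤ K) (hN : 2 ≤ N) (Lw Lx : ℝ)
    (hLw : 0 < Lw) (C : LDC K N M Lw Lx) (hU : C.IsUniversal)
    (hcap : Lw / Lx = Cstar N K) (i : Fin M) (k : Fin K) :
    0 < C.P.condH (C.X i)
      (C.P.tuple fun j : {x // x ∈ ({k}ᶜ : Finset (Fin K))} => C.W j.1) :=
  uldc_nonzero_entropy_general K N M hK Lw Lx hLw C hU hcap i k
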